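/- arXiv:2406.06794 — 2 statements merged into one kernel-verified Lean document; each statement's English description precedes it below -/
import Mathlib

section
/- Translation replacement (Proposition 2.3(b)): If Γ satisfies volume control with parameters (α,c_L,c_U), then there exist constants C, b > 0, depending only on α, c_L, c_U, such that for every 0 < κ < 1 and every real R ≥ 1 there exist a natural number J ≤ C·κ^{-α} and J countable coverings 𝒫^{(j)} = {B(z_i^{(j)},R)}_{i≥1} of 𝕍 (j = 1,…,J), each with the property that every vertex belongs to at most b of its balls, such that ⋃_{j=1}^{J} ⋃_{i} B(z_i^{(j)}, κR) = 𝕍. -/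
open scoped BigOperators

namespace LandscapeGraph

variable {V : Type*}

/-- Ball of real radius `r` with respect to the shortest-path graph metric. -/
def gball (G : SimpleGraph V) (x : V) (r : ℝ) : Set V :=
  {y | G.Reachable x y ∧ (G.dist x y : ℝ) ≤ r}

/-- The degree of a vertex, as a real number. -/
noncomputable def ndeg (G : SimpleGraph V) (x : V) : ℝ := ((G.neighborSet x).ncard : ℝ)

/-- The graph Laplacian `Δf(x) = Σ_{y∼x} (f(y) - f(x))`. -/
noncomputable def lap (G : SimpleGraph V) (f : V → ℝ) (x : V) : ℝ :=
  ∑ᶠ y ∈ G.neighborSet x, (f y - f x)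

/-- Volume control (Ahlfors `α`-regularity) with parameters `(α, cL, cU)`. -/
def VolCtrl (G : SimpleGraph V) (α cL cU : ℝ) : Prop :=
  ∀ x : V, ∀ r : ℝ, 1 ≤ r →
    cL * r ^ α ≤ ((gball G x r).ncard : ℝ) ∧ ((gball G x r).ncard : ℝ) ≤ cU * r ^ α

/-- Degree-weighted average of `f` over a set `S`. -/
noncomputable def wavg (G : SimpleGraph V) (S : Set V) (f : V → ℝ) : ℝ :=
  (∑ᶠ z ∈ S, f z * ndeg G z) / ∑ᶠ z ∈ S, ndeg G z

/-- The Dirichlet-type energy `Σ_{z,w∈S, z∼w} (f z - f w)²` (over ordered pairs). -/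
noncomputable def pairEnergy (G : SimpleGraph V) (S : Set V) (f : V → ℝ) : ℝ :=
  ∑ᶠ z ∈ S, ∑ᶠ w ∈ {w ∈ S | G.Adj z w}, (f z - f w) ^ 2

/-- The weak Poincaré inequality with constants `(CP, lam)`. -/
def WeakPI (G : SimpleGraph V) (CP lam : ℝ) : Prop :=
  ∀ x : V, ∀ r : ℝ, 1 ≤ r → ∀ f : V → ℝ,
    (∑ᶠ z ∈ gball G x r, (f z - wavg G (gball G x r) f) ^ 2) ≤
      CP * r ^ 2 * pairEnergy G (gball G x (lam * r)) f

/-- The Dirichlet restriction `H^A` of the Jacobi operator, acting on functions. -/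
noncomputable def HAop (G : SimpleGraph V) (μ : V → V → ℝ) (Vpot : V → ℝ) (A : Set V)
    (f : V → ℝ) (x : V) : ℝ :=
  ndeg G x * f x - (∑ᶠ y ∈ {y ∈ A | G.Adj x y}, μ x y * f y) + Vpot x * f x

/-- Symmetric bond weights with values in `[0,1]`. -/
def BondWeights (G : SimpleGraph V) (μ : V → V → ℝ) : Prop :=
  ∀ x y, G.Adj x y → μ x y = μ y x ∧ 0 ≤ μ x y ∧ μ x y ≤ 1

/-- `u` is the landscape function of `H^A`: positive on `A` and solving `H^A u = 1` on `A`. -/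
def IsLandscape (G : SimpleGraph V) (μ : V → V → ℝ) (Vpot : V → ℝ) (A : Finset V)
    (u : V → ℝ) : Prop :=
  (∀ x ∈ A, 0 < u x) ∧ ∀ x ∈ A, HAop G μ Vpot (↑A) u x = 1

open Classical in
/-- The Dirichlet restriction `H^A` as a matrix indexed by `A`. -/
noncomputable def HAmat (G : SimpleGraph V) (μ : V → V → ℝ) (Vpot : V → ℝ) (A : Finset V) :
    Matrix A A ℝ := fun x y =>
  (if (x : V) = (y : V) then ndeg G (x : V) + Vpot (x : V) else 0) -
    (if G.Adj (x : V) (y : V) then μ (x : V) (y : V) else 0)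

open Classical in
/-- The integrated density of states: number of eigenvalues `≤ E` (with multiplicity),
divided by `|A|`. -/
noncomputable def NA {A : Finset V} {M : Matrix A A ℝ} (hM : M.IsHermitian) (E : ℝ) : ℝ :=
  ((Finset.univ.filter fun i => hM.eigenvalues i ≤ E).card : ℝ) / (A.card : ℝ)

/-- `Z` is the set of centers of a covering of `𝕍` by balls of radius `R`
with finite overlap constant `b`. -/
def IsCover (G : SimpleGraph V) (Z : Set V) (R b : ℝ) : Prop :=
  (∀ y : V, ∃ z ∈ Z, y ∈ gball G z R) ∧
    ∀ y : V, (({z ∈ Z | y ∈ gball G z R}).ncard : ℝ) ≤ b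

/-- The landscape counting function `N_u^{𝒫,A}(E)` for the cover with centers `Z` and radius `R`:
the number of balls `B` of the cover with `min_{x ∈ B∩A} 1/u(x) ≤ E`, divided by `|A|`. -/
noncomputable def Nu (G : SimpleGraph V) (u : V → ℝ) (A : Finset V) (Z : Set V) (R E : ℝ) : ℝ :=
  (({z ∈ Z | ∃ x ∈ A, x ∈ gball G z R ∧ 1 / u x ≤ E}).ncard : ℝ) / (A.card : ℝ)

/-- The diameter of a finite set of vertices in the graph metric. -/
noncomputable def diamA (G : SimpleGraph V) (A : Finset V) : ℝ :=
  ((A.sup fun x => A.sup fun y => G.dist x y : ℕ) : ℝ)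

/-- `A` has sufficient overlap with balls, with constant `cA`. -/
def SuffOverlap (G : SimpleGraph V) (A : Finset V) (α cA : ℝ) : Prop :=
  ∀ x ∈ A, ∀ r : ℝ, 1 ≤ r → r ≤ 4 * diamA G A →
    cA * r ^ α ≤ (((↑A : Set V) ∩ gball G x r).ncard : ℝ)

/-- The Dirichlet Laplacian `-Δ^B` of a region `B`, acting on functions:
`(-Δ^B f)(x) = deg(x) f(x) - Σ_{y ∈ B, y ∼ x} f(y)`. -/
noncomputable def negDirLap (G : SimpleGraph V) (B : Set V) (f : V → ℝ) (x : V) : ℝ :=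
  ndeg G x * f x - ∑ᶠ y ∈ {y ∈ B | G.Adj x y}, f y

/-- Exterior (vertex) boundary of a set. -/
def extBoundary (G : SimpleGraph V) (S : Set V) : Set V :=
  {x | x ∉ S ∧ ∃ y ∈ S, G.Adj x y}

/-- Ball with respect to an abstract metric `d`. -/
def dball (d : V → V → ℝ) (ξ : V) (R : ℝ) : Set V := {y | d ξ y ≤ R}

/-- The harmonic weight assumption: a metric `d` strongly equivalent (constant `c`) to the
graph metric, together with harmonic weights `h ξ R : B^d(ξ,R) → [0,1]` satisfying the
submean property for subharmonic functions (with equality for harmonic ones), and a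
uniform lower bound `c' / |B^d(ξ,R)|` off `bad' sets `X ξ R` of asymptotically
negligible proportion. -/
structure HarmonicWeight (G : SimpleGraph V) (d : V → V → ℝ) (h : V → ℝ → V → ℝ)
    (X : V → ℝ → Set V) (c c' : ℝ) : Prop where
  c_one : 1 ≤ c
  c'_pos : 0 < c'
  d_self : ∀ x, d x x = 0
  d_eq_zero : ∀ x y, d x y = 0 → x = y
  d_symm : ∀ x y, d x y = d y x
  d_triangle : ∀ x y z, d x z ≤ d x y + d y z
  d_lower : ∀ x y, c⁻¹ * (G.dist x y : ℝ) ≤ d x y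
  d_upper : ∀ x y, d x y ≤ c * (G.dist x y : ℝ)
  h_mem : ∀ ξ (R : ℝ) y, y ∈ dball d ξ R → h ξ R y ∈ Set.Icc (0 : ℝ) 1
  submean : ∀ ξ (R : ℝ), 0 < R → ∀ f : V → ℝ,
    (∀ x ∈ dball d ξ R ∪ extBoundary G (dball d ξ R), 0 ≤ lap G f x) →
    f ξ ≤ ∑ᶠ y ∈ dball d ξ R, h ξ R y * f y
  harm_eq : ∀ ξ (R : ℝ), 0 < R → ∀ f : V → ℝ,
    (∀ x ∈ dball d ξ R ∪ extBoundary G (dball d ξ R), lap G f x = 0) →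
    f ξ = ∑ᶠ y ∈ dball d ξ R, h ξ R y * f y
  X_subset : ∀ ξ (R : ℝ), X ξ R ⊆ dball d ξ R
  h_lower : ∀ ξ (R : ℝ), ∀ y ∈ dball d ξ R \ X ξ R,
    c' / ((dball d ξ R).ncard : ℝ) ≤ h ξ R y
  X_small : ∀ ε : ℝ, 0 < ε → ∃ R₀ : ℝ, ∀ R : ℝ, R₀ ≤ R → ∀ ξ : V,
    ((X ξ R).ncard : ℝ) ≤ ε * ((dball d ξ R).ncard : ℝ)

/-!
Take a maximal `κR`-separated set `Z`; its balls of radius `κR` cover `𝕍`. Comparing the volumes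
of disjoint small balls with that of a big ball, volume control bounds the number of
`s`-separated points in a ball of radius `R` by `C (R/s)^α`, so every point of `Z` has fewer
than `K = ⌈C κ^{-α}⌉` other points of `Z` within distance `R`. A proper colouring with `K`
colours of this "closeness" graph splits `Z` into `K` classes that are `R`-separated; extending
each class to a maximal `R`-separated set gives a cover by balls of radius `R`, whose overlap is
at most `C` by the same packing bound with `s = R`.
-/

theorem _root_.Set.Pairwise.exists_maximal_superset {α : Type*} {r : α → α → Prop} {W : Set α}
    (hW : W.Pairwise r) : ∃ Z, W ⊆ Z ∧ Maximal (fun T : Set α => T.Pairwise r) Z :=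
  zorn_subset_nonempty {T | T.Pairwise r}
    (fun _ hc hchain _ => ⟨_, hchain.pairwise_sUnion.2 hc, fun _ => Set.subset_sUnion_of_mem⟩)
    W hW

/-- A proper partial colouring is a set of vertex–colour pairs that is pairwise compatible;
by Zorn there is a maximal one, and it is total because a vertex has fewer than `K` neighbours. -/
theorem _root_.SimpleGraph.colorable_of_encard_neighborSet_lt {α : Type*} (H : SimpleGraph α)
    {K : ℕ} (hdeg : ∀ v, (H.neighborSet v).encard < K) : H.Colorable K := by
  let compatible : α × Fin K → α × Fin K → Prop := fun p q =>
    (p.1 = q.1 → p.2 = q.2) ∧ (H.Adj p.1 q.1 → p.2 ≠ q.2)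
  have hsymm : ∀ p q, compatible p q → compatible q p := fun p q h =>
    ⟨fun e => (h.1 e.symm).symm, fun hadj e => h.2 hadj.symm e.symm⟩
  obtain ⟨P, -, hP⟩ := (Set.pairwise_empty compatible).exists_maximal_superset
  have hfst : Set.InjOn Prod.fst P := fun p hp q hq e => by
    by_contra hne
    exact hne (Prod.ext e ((hP.1 hp hq hne).1 e))
  have htotal : ∀ v, ∃ i, (v, i) ∈ P := by
    intro v
    by_contra! hv
    set N := P ∩ Prod.fst ⁻¹' H.neighborSet v
    have hused : (Prod.snd '' N).encard < (Set.univ : Set (Fin K)).encard := calc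
      (Prod.snd '' N).encard ≤ N.encard := Set.encard_image_le _ _
      _ = (Prod.fst '' N).encard := ((hfst.mono Set.inter_subset_left).encard_image).symm
      _ ≤ (H.neighborSet v).encard := Set.encard_le_encard
        ((Set.image_mono Set.inter_subset_right).trans (Set.image_preimage_subset _ _))
      _ < _ := by simpa using hdeg v
    obtain ⟨i, hi⟩ : ∃ i, i ∉ Prod.snd '' N := by
      by_contra! h
      exact hused.ne (by rw [Set.eq_univ_of_forall h])
    have hcompat : ∀ q ∈ P, compatible (v, i) q := fun q hq =>
      ⟨fun (e : v = q.1) => (hv q.2 (e ▸ hq)).elim, fun hadj e => hi ⟨q, ⟨hq, hadj⟩, e.symm⟩⟩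
    have hins : (insert (v, i) P).Pairwise compatible :=
      Set.pairwise_insert.2 ⟨hP.1, fun q hq _ => ⟨hcompat q hq, hsymm _ _ (hcompat q hq)⟩⟩
    exact hv i (hP.2 hins (Set.subset_insert _ _) (Set.mem_insert _ _))
  choose c hc using htotal
  exact ⟨.mk c fun {v w} hvw =>
    (hP.1 (hc v) (hc w) (fun e => hvw.ne (congrArg Prod.fst e))).2 hvw⟩

theorem _root_.Set.ncard_mul_le_ncard_of_pairwiseDisjoint {ι α : Type*} {t : Set ι}
    {s : ι → Set α} {S : Set α} {m : ℝ} (ht : t.Finite) (hS : S.Finite)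
    (hsub : ∀ i ∈ t, s i ⊆ S) (hdisj : t.PairwiseDisjoint s) (hm : ∀ i ∈ t, m ≤ (s i).ncard) :
    t.ncard * m ≤ S.ncard := calc
  (t.ncard : ℝ) * m = ∑ _ ∈ ht.toFinset, m := by simp [Set.ncard_eq_toFinset_card t ht]
  _ ≤ ∑ i ∈ ht.toFinset, ((s i).ncard : ℝ) :=
    Finset.sum_le_sum fun i hi => hm i (ht.mem_toFinset.1 hi)
  _ = ((⋃ i ∈ t, s i).ncard : ℝ) := by
    rw [ht.ncard_biUnion (fun i hi => hS.subset (hsub i hi)) hdisj,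
      finsum_mem_eq_finite_toFinset_sum _ ht]
    push_cast
    rfl
  _ ≤ S.ncard := mod_cast Set.ncard_le_ncard (Set.iUnion₂_subset hsub) hS

section Balls

variable {G : SimpleGraph V}

theorem mem_gball_comm {x y : V} {r : ℝ} : y ∈ gball G x r ↔ x ∈ gball G y r := by
  simp only [gball, Set.mem_ofPred_eq, SimpleGraph.reachable_comm, SimpleGraph.dist_comm]

theorem mem_gball_self {x : V} {r : ℝ} (hr : 0 ≤ r) : x ∈ gball G x r :=
  ⟨.refl x, by simpa using hr⟩

theorem gball_mono {x : V} {r r' : ℝ} (h : r ≤ r') : gball G x r ⊆ gball G x r' :=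
  fun _ hy => ⟨hy.1, hy.2.trans h⟩

theorem gball_subset_gball_add {x y : V} {r r' : ℝ} (hy : y ∈ gball G x r) :
    gball G y r' ⊆ gball G x (r + r') := fun z hz =>
  ⟨hy.1.trans hz.1, by
    have : (G.dist x z : ℝ) ≤ G.dist x y + G.dist y z := mod_cast hy.1.dist_triangle_left z
    linarith [hy.2, hz.2]⟩

def IsSeparated (G : SimpleGraph V) (s : ℝ) (Z : Set V) : Prop :=
  Z.Pairwise fun z z' => z' ∉ gball G z s

theorem exists_mem_gball_of_maximal_isSeparated {s : ℝ} (hs : 0 ≤ s) {Z : Set V}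
    (hZ : Maximal (IsSeparated G s) Z) (y : V) : ∃ z ∈ Z, y ∈ gball G z s := by
  by_contra! hy
  have hins : IsSeparated G s (insert y Z) := Set.pairwise_insert.2
    ⟨hZ.1, fun z hz _ => ⟨fun h => hy z hz (mem_gball_comm.1 h), hy z hz⟩⟩
  exact hy y (hZ.2 hins (Set.subset_insert _ _) (Set.mem_insert _ _)) (mem_gball_self hs)

theorem exists_isSeparated_cover_of_encard_le {Z : Set V} {R : ℝ} {K : ℕ}
    (hR : 0 ≤ R) (hK : ∀ z ∈ Z, (Z ∩ gball G z R).encard ≤ K) :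
    ∃ W : Fin K → Set V, (∀ j, IsSeparated G R (W j)) ∧ Z ⊆ ⋃ j, W j := by
  let H : SimpleGraph Z := SimpleGraph.fromRel fun z z' => (z' : V) ∈ gball G z R
  have hdeg : ∀ z, (H.neighborSet z).encard < K := by
    intro z
    have hfin : (Z ∩ gball G z R).Finite := Set.finite_of_encard_le_coe (hK z z.2)
    calc (H.neighborSet z).encard = (Subtype.val '' H.neighborSet z).encard :=
          Subtype.val_injective.injOn.encard_image.symm
      _ ≤ ((Z ∩ gball G z R) \ {(z : V)}).encard := by
          refine Set.encard_le_encard ?_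
          rintro _ ⟨w, ⟨hne, hw⟩, rfl⟩
          exact ⟨⟨w.2, hw.elim id mem_gball_comm.1⟩, fun h => hne (Subtype.ext h).symm⟩
      _ < (Z ∩ gball G z R).encard :=
          hfin.sdiff.encard_lt_encard (Set.sdiff_singleton_ssubset.2 ⟨z.2, mem_gball_self hR⟩)
      _ ≤ K := hK z z.2
  obtain ⟨c⟩ := H.colorable_of_encard_neighborSet_lt hdeg
  refine ⟨fun j => Subtype.val '' (c ⁻¹' {j}), ?_,
    fun z hz => Set.mem_iUnion.2 ⟨c ⟨z, hz⟩, ⟨z, hz⟩, rfl, rfl⟩⟩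
  rintro j _ ⟨z, hz, rfl⟩ _ ⟨z', hz', rfl⟩ hne hmem
  exact c.valid (G := H) ⟨fun e => hne (congrArg Subtype.val e), Or.inl hmem⟩ (hz.trans hz'.symm)

end Balls

section VolumeControl

variable {G : SimpleGraph V} {α cL cU : ℝ}

theorem VolCtrl.finite_gball (hvol : VolCtrl G α cL cU) (hcL : 0 < cL) (x : V) {r : ℝ}
    (hr : 1 ≤ r) : (gball G x r).Finite :=
  Set.finite_of_ncard_pos <| by
    have : (0 : ℝ) < (gball G x r).ncard :=
      (mul_pos hcL (Real.rpow_pos_of_pos (by linarith) α)).trans_le (hvol x r hr).1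
    exact_mod_cast this

theorem VolCtrl.ncard_inter_gball_le_of_two_le (hvol : VolCtrl G α cL cU) (hcL : 0 < cL)
    {Z : Set V} {s R : ℝ} (hs : 2 ≤ s) (hsR : s ≤ R) (hZ : IsSeparated G s Z) (x : V) :
    ((Z ∩ gball G x R).ncard : ℝ) ≤ cU / cL * 4 ^ α * (R / s) ^ α := by
  have hcount := Set.ncard_mul_le_ncard_of_pairwiseDisjoint (s := fun z => gball G z (s / 2))
    (m := cL * (s / 2) ^ α) ((hvol.finite_gball hcL x (by linarith)).subset Set.inter_subset_right)
    (hvol.finite_gball hcL x (r := 2 * R) (by linarith))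
    (fun z hz => (gball_subset_gball_add hz.2).trans (gball_mono (by linarith)))
    (fun z hz z' hz' hne => Set.disjoint_left.2 fun w hw hw' =>
      hZ hz.1 hz'.1 hne (by simpa using gball_subset_gball_add hw (mem_gball_comm.1 hw')))
    (fun z _ => (hvol z _ (by linarith)).1)
  have hs0 : 0 < s := by linarith
  have hR0 : 0 < R := by linarith
  have hsplit : (2 * R) ^ α = 4 ^ α * (R / s) ^ α * (s / 2) ^ α := by
    rw [← Real.mul_rpow (by norm_num) (by positivity),
      ← Real.mul_rpow (by positivity) (by positivity)]
    congr 1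
    field_simp
    ring
  have hpos : 0 < cL * (s / 2) ^ α := mul_pos hcL (by positivity)
  refine le_of_mul_le_mul_right (hcount.trans ((hvol x (2 * R) (by linarith)).2.trans_eq ?_)) hpos
  rw [hsplit]
  field_simp

/-- `4^α cU/cL` comes from packing disjoint balls of radius `s/2 ≥ 1`; `2^α cU` handles `s < 2`,
where such balls are too small for the lower volume bound. -/
noncomputable def packingConst (α cL cU : ℝ) : ℝ := cU / cL * 4 ^ α + cU * 2 ^ α

theorem VolCtrl.ncard_inter_gball_le (hvol : VolCtrl G α cL cU) (hα : 0 ≤ α) (hcL : 0 < cL)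
    (hcU : 0 < cU) {Z : Set V} {s R : ℝ} (hs : 0 < s) (hsR : s ≤ R) (hR : 1 ≤ R)
    (hZ : IsSeparated G s Z) (x : V) :
    ((Z ∩ gball G x R).ncard : ℝ) ≤ packingConst α cL cU * (R / s) ^ α := by
  have hfour : 0 ≤ cU / cL * 4 ^ α * (R / s) ^ α := by positivity
  have htwo : 0 ≤ cU * 2 ^ α * (R / s) ^ α := by positivity
  rw [packingConst, add_mul]
  rcases le_or_gt 2 s with hs2 | hs2
  · linarith [hvol.ncard_inter_gball_le_of_two_le hcL hs2 hsR hZ x]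
  · have hR2 : R ^ α ≤ 2 ^ α * (R / s) ^ α := by
      rw [← Real.mul_rpow (by norm_num) (by positivity)]
      refine Real.rpow_le_rpow (by linarith) ?_ hα
      rw [mul_div_assoc', le_div_iff₀ hs]
      nlinarith
    calc ((Z ∩ gball G x R).ncard : ℝ) ≤ (gball G x R).ncard :=
          mod_cast Set.ncard_le_ncard Set.inter_subset_right (hvol.finite_gball hcL x hR)
      _ ≤ cU * R ^ α := (hvol x R hR).2
      _ ≤ cU * 2 ^ α * (R / s) ^ α := by rw [mul_assoc]; gcongr
      _ ≤ _ := by linarith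

end VolumeControl

theorem translation_replacement_general
    {V : Type*}
    (G : SimpleGraph V)
    (α cL cU : ℝ) (hα : 1 ≤ α) (hcL : 0 < cL) (hcU : 0 < cU)
    (hvol : VolCtrl G α cL cU) :
    ∃ C b : ℝ, 0 < C ∧ 0 < b ∧
      ∀ κ : ℝ, 0 < κ → κ < 1 → ∀ R : ℝ, 1 ≤ R →
        ∃ (J : ℕ) (Zs : Fin J → Set V),
          (J : ℝ) ≤ C * κ ^ (-α) ∧
          (∀ j : Fin J, IsCover G (Zs j) R b) ∧
          ∀ y : V, ∃ j : Fin J, ∃ z ∈ Zs j, y ∈ gball G z (κ * R) := by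
  have hα0 : 0 ≤ α := by linarith
  have hC : 0 < packingConst α cL cU := by unfold packingConst; positivity
  refine ⟨packingConst α cL cU + 1, packingConst α cL cU, by positivity, hC,
    fun κ hκ hκ1 R hR => ?_⟩
  have hR0 : 0 < R := by linarith
  have hκR : 0 < κ * R := by positivity
  have hκα : 1 ≤ κ ^ (-α) := Real.one_le_rpow_of_pos_of_le_one_of_nonpos hκ hκ1.le (by linarith)
  obtain ⟨Z, -, hZ⟩ : ∃ Z, ∅ ⊆ Z ∧ Maximal (IsSeparated G (κ * R)) Z :=
    (Set.pairwise_empty _).exists_maximal_superset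
  set K := ⌈packingConst α cL cU * κ ^ (-α)⌉₊
  have hpack : ∀ z ∈ Z, (Z ∩ gball G z R).encard ≤ K := by
    intro z _
    have h := hvol.ncard_inter_gball_le hα0 hcL hcU hκR (by nlinarith) hR hZ.1 z
    rw [div_mul_cancel_right₀ hR0.ne', Real.inv_rpow hκ.le, ← Real.rpow_neg hκ.le] at h
    rw [← ((hvol.finite_gball hcL z hR).subset Set.inter_subset_right).cast_ncard_eq]
    exact_mod_cast h.trans (Nat.le_ceil _)
  obtain ⟨W, hW, hZW⟩ := exists_isSeparated_cover_of_encard_le hR0.le hpack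
  choose Zs hWZs hZs using fun j => (hW j).exists_maximal_superset
  refine ⟨K, Zs, ?_, fun j => ⟨exists_mem_gball_of_maximal_isSeparated hR0.le (hZs j), fun y => ?_⟩,
    fun y => ?_⟩
  · nlinarith [Nat.ceil_lt_add_one (mul_pos hC (by positivity : 0 < κ ^ (-α))).le]
  · have hballs : {z ∈ Zs j | y ∈ gball G z R} = Zs j ∩ gball G y R :=
      Set.ext fun _ => and_congr_right fun _ => mem_gball_comm
    simpa [hballs, hR0.ne'] using hvol.ncard_inter_gball_le hα0 hcL hcU hR0 le_rfl hR (hZs j).1 y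
  · obtain ⟨z, hz, hyz⟩ := exists_mem_gball_of_maximal_isSeparated hκR.le hZ y
    obtain ⟨j, hj⟩ := Set.mem_iUnion.1 (hZW hz)
    exact ⟨j, z, hWZs j hj, hyz⟩

/-- **Translation replacement** (Proposition 2.3(b)).  Under volume control there are constants
`C, b > 0` depending only on `α, cL, cU` such that for every `0 < κ < 1` and `R ≥ 1` there are
at most `C·κ^{-α}` coverings by balls of radius `R`, each with finite overlap constant `b`,
whose concentric balls of radius `κR` together cover `𝕍`. -/
theorem translation_replacement
    {V : Type*} [Countable V] [Infinite V]
    (G : SimpleGraph V) (hconn : G.Connected)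
    (α cL cU : ℝ) (hα : 1 ≤ α) (hcL : 0 < cL) (hcU : 0 < cU)
    (hvol : VolCtrl G α cL cU) :
    ∃ C b : ℝ, 0 < C ∧ 0 < b ∧
      ∀ κ : ℝ, 0 < κ → κ < 1 → ∀ R : ℝ, 1 ≤ R →
        ∃ (J : ℕ) (Zs : Fin J → Set V),
          (J : ℝ) ≤ C * κ ^ (-α) ∧
          (∀ j : Fin J, IsCover G (Zs j) R b) ∧
          ∀ y : V, ∃ j : Fin J, ∃ z ∈ Zs j, y ∈ gball G z (κ * R) :=
  translation_replacement_general G α cL cU hα hcL hcU hvol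

end LandscapeGraph
end

section
/- Landscape uncertainty principle: Let Γ be a locally finite graph, A ⊆ 𝕍 a finite nonempty subset, μ_{xy} = μ_{yx} ∈ [0,1] symmetric bond weights for x∼y, and V_x ≥ 0 potentials, and let H^A be the Dirichlet restriction. Suppose u: A → ℝ satisfies u(x) > 0 for all x ∈ A and H^A u(x) = 1 for all x ∈ A. Then for every f: A → ℝ: Σ_{x∈A} f(x)·(H^A f)(x) = (1/2)·Σ_{x,y∈A: x∼y} μ_{xy}·u(x)·u(y)·(f(x)/u(x) − f(y)/u(y))² + Σ_{x∈A} f(x)²/u(x), where the double sum ranges over all ordered pairs (x,y) of adjacent vertices of A. -/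
open scoped BigOperators

namespace LandscapeGraph

variable {V : Type*}

/-! Ground state representation. Writing `f = u g`, the form `⟨f, (d - W) f⟩` of a symmetric
kernel `W` equals `½ Σ W_{xy} u_x u_y (g_x - g_y)² + Σ ((d - W) u)_x u_x g_x²`: expand the square
and use the symmetry of `W` to identify the two squared terms. For the landscape function
`(d - W) u = H^A u = 1` on `A`, and the last sum becomes `Σ f²/u`. -/

section GroundState

variable {ι : Type*} (s : Finset ι) (d : ι → ℝ) (W : ι → ι → ℝ) (u : ι → ℝ)

open Finset

theorem sum_sum_mul_sq_right_eq_left (hW : ∀ x ∈ s, ∀ y ∈ s, W x y = W y x) (g : ι → ℝ) :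
    ∑ x ∈ s, ∑ y ∈ s, W x y * u x * u y * g y ^ 2 =
      ∑ x ∈ s, ∑ y ∈ s, W x y * u x * u y * g x ^ 2 := by
  rw [sum_comm]
  refine sum_congr rfl fun y hy => sum_congr rfl fun x hx => ?_
  rw [hW x hx y hy]
  ring

theorem ground_state_representation_mul (hW : ∀ x ∈ s, ∀ y ∈ s, W x y = W y x)
    (g : ι → ℝ) :
    ∑ x ∈ s, u x * g x * (d x * (u x * g x) - ∑ y ∈ s, W x y * (u y * g y)) =
      (1 / 2) * ∑ x ∈ s, ∑ y ∈ s, W x y * u x * u y * (g x - g y) ^ 2 +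
        ∑ x ∈ s, (d x * u x - ∑ y ∈ s, W x y * u y) * u x * g x ^ 2 := by
  set diag := ∑ x ∈ s, d x * u x ^ 2 * g x ^ 2
  set cross := ∑ x ∈ s, ∑ y ∈ s, W x y * u x * u y * (g x * g y)
  set offdiag := ∑ x ∈ s, ∑ y ∈ s, W x y * u x * u y * g x ^ 2
  have hform : ∑ x ∈ s, u x * g x * (d x * (u x * g x) - ∑ y ∈ s, W x y * (u y * g y)) =
      diag - cross := by
    simp only [mul_sub, mul_sum, sum_sub_distrib]
    congr 1 <;> refine sum_congr rfl fun x _ => ?_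
    · ring
    · exact sum_congr rfl fun y _ => by ring
  have hpot : ∑ x ∈ s, (d x * u x - ∑ y ∈ s, W x y * u y) * u x * g x ^ 2 =
      diag - offdiag := by
    simp only [sub_mul, sum_mul, sum_sub_distrib]
    congr 1 <;> refine sum_congr rfl fun x _ => ?_
    · ring
    · exact sum_congr rfl fun y _ => by ring
  have henergy : ∑ x ∈ s, ∑ y ∈ s, W x y * u x * u y * (g x - g y) ^ 2 =
      2 * offdiag - 2 * cross := by
    have hexpand : ∀ x y, W x y * u x * u y * (g x - g y) ^ 2 =
        W x y * u x * u y * g x ^ 2 + W x y * u x * u y * g y ^ 2 -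
          2 * (W x y * u x * u y * (g x * g y)) := fun x y => by ring
    simp only [hexpand, sum_sub_distrib, sum_add_distrib, ← mul_sum,
      sum_sum_mul_sq_right_eq_left s W u hW]
    ring
  rw [hform, hpot, henergy]
  ring

theorem ground_state_representation (hW : ∀ x ∈ s, ∀ y ∈ s, W x y = W y x)
    (hu : ∀ x ∈ s, u x ≠ 0) (f : ι → ℝ) :
    ∑ x ∈ s, f x * (d x * f x - ∑ y ∈ s, W x y * f y) =
      (1 / 2) * ∑ x ∈ s, ∑ y ∈ s, W x y * u x * u y * (f x / u x - f y / u y) ^ 2 +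
        ∑ x ∈ s, (d x * u x - ∑ y ∈ s, W x y * u y) * f x ^ 2 / u x := by
  have hf : ∀ x ∈ s, u x * (f x / u x) = f x := fun x hx => mul_div_cancel₀ _ (hu x hx)
  calc ∑ x ∈ s, f x * (d x * f x - ∑ y ∈ s, W x y * f y)
      = ∑ x ∈ s, u x * (f x / u x) *
          (d x * (u x * (f x / u x)) - ∑ y ∈ s, W x y * (u y * (f y / u y))) := by
        refine sum_congr rfl fun x hx => ?_
        rw [hf x hx, sum_congr rfl fun y hy => congrArg (W x y * ·) (hf y hy)]
    _ = _ := ground_state_representation_mul s d W u hW _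
    _ = _ := by
        congr 1
        refine sum_congr rfl fun x hx => ?_
        field_simp [hu x hx]

end GroundState

open Classical in
noncomputable def adjWeight (G : SimpleGraph V) (μ : V → V → ℝ) (x y : V) : ℝ :=
  if G.Adj x y then μ x y else 0

theorem BondWeights.adjWeight_comm {G : SimpleGraph V} {μ : V → V → ℝ} (hμ : BondWeights G μ)
    (x y : V) : adjWeight G μ x y = adjWeight G μ y x := by
  by_cases h : G.Adj x y
  · simp [adjWeight, h, h.symm, (hμ x y h).1]
  · have h' : ¬G.Adj y x := fun h' => h h'.symm
    simp [adjWeight, h, h']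

open Classical in
theorem finsum_mem_adj_eq_sum (G : SimpleGraph V) (A : Finset V) (x : V) (F : V → ℝ) :
    ∑ᶠ y ∈ {y ∈ (↑A : Set V) | G.Adj x y}, F y = ∑ y ∈ A, if G.Adj x y then F y else 0 := by
  rw [← Finset.sum_filter, ← finsum_mem_coe_finset, Finset.coe_filter]
  rfl

theorem HAop_coe_finset (G : SimpleGraph V) (μ : V → V → ℝ) (Vpot : V → ℝ) (A : Finset V)
    (f : V → ℝ) (x : V) :
    HAop G μ Vpot (↑A) f x = (ndeg G x + Vpot x) * f x - ∑ y ∈ A, adjWeight G μ x y * f y := by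
  classical
  simp only [HAop, finsum_mem_adj_eq_sum, adjWeight, ite_mul, zero_mul]
  ring

theorem landscape_uncertainty_principle_general
    {V : Type*}
    (G : SimpleGraph V)
    (A : Finset V)
    (μ : V → V → ℝ) (Vpot : V → ℝ) (hμ : BondWeights G μ)
    (u : V → ℝ) (hu : IsLandscape G μ Vpot A u) :
    ∀ f : V → ℝ,
      (∑ᶠ x ∈ (↑A : Set V), f x * HAop G μ Vpot (↑A) f x) =
        (1 / 2) *
            (∑ᶠ x ∈ (↑A : Set V), ∑ᶠ y ∈ {y ∈ (↑A : Set V) | G.Adj x y},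
              μ x y * u x * u y * (f x / u x - f y / u y) ^ 2) +
          ∑ᶠ x ∈ (↑A : Set V), f x ^ 2 / u x := by
  classical
  intro f
  have hLu : ∀ x ∈ A, (ndeg G x + Vpot x) * u x - ∑ y ∈ A, adjWeight G μ x y * u y = 1 :=
    fun x hx => by rw [← HAop_coe_finset]; exact hu.2 x hx
  simp only [finsum_mem_coe_finset, HAop_coe_finset, finsum_mem_adj_eq_sum]
  rw [ground_state_representation A _ (adjWeight G μ) u (fun x _ y _ => hμ.adjWeight_comm x y)
    (fun x hx => (hu.1 x hx).ne') f]
  congr 1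
  · congr 1
    refine Finset.sum_congr rfl fun x _ => Finset.sum_congr rfl fun y _ => ?_
    simp only [adjWeight, ite_mul, zero_mul]
  · exact Finset.sum_congr rfl fun x hx => by rw [hLu x hx, one_mul]

/-- **Landscape uncertainty principle**: for the landscape function `u` of `H^A`,
`⟨f, H^A f⟩ = ½ Σ_{x,y∈A, x∼y} μ_{xy} u(x) u(y) (f(x)/u(x) - f(y)/u(y))² + Σ_{x∈A} f(x)²/u(x)`. -/
theorem landscape_uncertainty_principle
    {V : Type*}
    (G : SimpleGraph V) (hlf : ∀ x : V, (G.neighborSet x).Finite)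
    (A : Finset V) (hA : A.Nonempty)
    (μ : V → V → ℝ) (Vpot : V → ℝ) (hμ : BondWeights G μ) (hV : ∀ x, 0 ≤ Vpot x)
    (u : V → ℝ) (hu : IsLandscape G μ Vpot A u) :
    ∀ f : V → ℝ,
      (∑ᶠ x ∈ (↑A : Set V), f x * HAop G μ Vpot (↑A) f x) =
        (1 / 2) *
            (∑ᶠ x ∈ (↑A : Set V), ∑ᶠ y ∈ {y ∈ (↑A : Set V) | G.Adj x y},
              μ x y * u x * u y * (f x / u x - f y / u y) ^ 2) +
          ∑ᶠ x ∈ (↑A : Set V), f x ^ 2 / u x :=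
  landscape_uncertainty_principle_general G A μ Vpot hμ u hu

end LandscapeGraph
end
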